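/- arXiv:1911.05194 — 2 statements merged into one kernel-verified Lean document; each statement's English description precedes it below -/
import Mathlib

section
/- Let 0 < r₁ < r₂ < ∞ and let u : [r₁,r₂] × ℝ → ℝ be continuous, 2π-periodic in the second variable, C² on the interior, satisfying the polar Laplace equation u_rr + (1/r)u_r + (1/r²)u_θθ = 0 on (r₁,r₂) × ℝ, and with ∫₀^{2π} u_r(√(r₁r₂), τ) dτ = 0. Define U(r,θ) = ∫_{√(r₁r₂)/r}^{1} u(rρ, θ)/ρ dρ + √(r₁r₂) ∫₀^θ ( C − ∫₀^t u_r(√(r₁r₂), τ) dτ ) dt, where C = (1/(2π)) ∫₀^{2π} ∫₀^t u_r(√(r₁r₂), τ) dτ dt. Then U is 2π-periodic in θ and satisfies the polar Laplace equation U_rr + (1/r)U_r + (1/r²)U_θθ = 0 on (r₁,r₂) × ℝ, with U_r(r,θ) = u(r,θ)/r for all r ∈ (r₁,r₂). -/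
noncomputable def pd1 (f : ℝ → ℝ → ℝ) (r θ : ℝ) : ℝ := deriv (fun s => f s θ) r
noncomputable def pd2 (f : ℝ → ℝ → ℝ) (r θ : ℝ) : ℝ := deriv (fun t => f r t) θ

/-!
Write `a = √(r₁ r₂)` and `F t = ∫₀ᵗ u_r(a, τ) dτ`. The substitution `s = r ρ` turns `U` into
`∫ₐʳ u(s, θ) / s ds + a G θ` with `G θ = ∫₀^θ (C - F)`, so `U_r = u / r` at once. In `θ` we
differentiate under the integral sign: the Laplace equation in the form
`u_θθ / s = -∂ₛ (s u_s)` gives `∫ₐʳ u_θθ / s ds = a u_r(a, θ) - r u_r(r, θ)`, and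
`a G'' = -a u_r(a, θ)` cancels the boundary term at `a`, leaving `U_θθ = -r u_r`.

For periodicity, `u_r(a, ·)` is periodic with mean zero, so `F` is periodic; `C` is the mean of
`F`, so `C - F` has mean zero and `G` is periodic too.
-/

open Set Function MeasureTheory Real

noncomputable def polarLaplacian (f : ℝ → ℝ → ℝ) (r θ : ℝ) : ℝ :=
  pd1 (pd1 f) r θ + (1 / r) * pd1 f r θ + (1 / r ^ 2) * pd2 (pd2 f) r θ

theorem ContDiffOn.differentiableAt_of_isOpen {E F : Type*} [NormedAddCommGroup E]
    [NormedSpace ℝ E] [NormedAddCommGroup F] [NormedSpace ℝ F] {g : E → F} {s : Set E} {x : E}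
    {n : WithTop ℕ∞} (hg : ContDiffOn ℝ n g s) (hs : IsOpen s) (hn : n ≠ 0) (hx : x ∈ s) :
    DifferentiableAt ℝ g x :=
  (hg.differentiableOn hn).differentiableAt (hs.mem_nhds hx)

section PartialDerivatives

variable {f : ℝ → ℝ → ℝ} {r θ : ℝ}

theorem DifferentiableAt.hasDerivAt_pd1 (hf : DifferentiableAt ℝ (uncurry f) (r, θ)) :
    HasDerivAt (f · θ) (pd1 f r θ) r :=
  (show DifferentiableAt ℝ (f · θ) r from
    hf.comp (f := fun s => (s, θ)) r
      (differentiableAt_id.prodMk (differentiableAt_const θ))).hasDerivAt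

theorem DifferentiableAt.hasDerivAt_pd2 (hf : DifferentiableAt ℝ (uncurry f) (r, θ)) :
    HasDerivAt (f r) (pd2 f r θ) θ :=
  (show DifferentiableAt ℝ (f r) θ from
    hf.comp (f := fun t => (r, t)) θ
      ((differentiableAt_const r).prodMk differentiableAt_id)).hasDerivAt

theorem pd1_eq_fderiv_apply (hf : DifferentiableAt ℝ (uncurry f) (r, θ)) :
    pd1 f r θ = fderiv ℝ (uncurry f) (r, θ) (1, 0) :=
  (HasFDerivAt.comp_hasDerivAt (l := uncurry f) r hf.hasFDerivAt
    ((hasDerivAt_id r).prodMk (hasDerivAt_const r θ))).deriv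

theorem pd2_eq_fderiv_apply (hf : DifferentiableAt ℝ (uncurry f) (r, θ)) :
    pd2 f r θ = fderiv ℝ (uncurry f) (r, θ) (0, 1) :=
  (HasFDerivAt.comp_hasDerivAt (l := uncurry f) θ hf.hasFDerivAt
    ((hasDerivAt_const θ r).prodMk (hasDerivAt_id θ))).deriv

variable {s : Set (ℝ × ℝ)} {m n : WithTop ℕ∞}

theorem ContDiffOn.pd1 (hf : ContDiffOn ℝ n (uncurry f) s) (hs : IsOpen s) (hmn : m + 1 ≤ n) :
    ContDiffOn ℝ m (uncurry (pd1 f)) s := by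
  have hn : n ≠ 0 := (zero_lt_one.trans_le (le_add_self.trans hmn)).ne'
  exact ((ContinuousLinearMap.apply ℝ ℝ ((1 : ℝ), (0 : ℝ))).contDiff.comp_contDiffOn
    (hf.fderiv_of_isOpen hs hmn)).congr fun p hp =>
      pd1_eq_fderiv_apply (hf.differentiableAt_of_isOpen hs hn hp)

theorem ContDiffOn.pd2 (hf : ContDiffOn ℝ n (uncurry f) s) (hs : IsOpen s) (hmn : m + 1 ≤ n) :
    ContDiffOn ℝ m (uncurry (pd2 f)) s := by
  have hn : n ≠ 0 := (zero_lt_one.trans_le (le_add_self.trans hmn)).ne'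
  exact ((ContinuousLinearMap.apply ℝ ℝ ((0 : ℝ), (1 : ℝ))).contDiff.comp_contDiffOn
    (hf.fderiv_of_isOpen hs hmn)).congr fun p hp =>
      pd2_eq_fderiv_apply (hf.differentiableAt_of_isOpen hs hn hp)

end PartialDerivatives

theorem Function.Periodic.periodic_primitive {E : Type*} [NormedAddCommGroup E] [NormedSpace ℝ E]
    {f : ℝ → E} {T : ℝ} (hf : Periodic f T)
    (hint : ∀ t₁ t₂, IntervalIntegrable f volume t₁ t₂) (hzero : ∫ x in 0..T, f x = 0) :
    Periodic (fun t => ∫ x in 0..t, f x) T := fun t => by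
  simp only [hf.intervalIntegral_add_eq_add 0 t hint, zero_add, hzero, add_zero]

theorem intervalIntegral.integral_comp_mul_left_div_self (g : ℝ → ℝ) {r : ℝ} (hr : r ≠ 0)
    (a : ℝ) :
    ∫ ρ in a / r..1, g (r * ρ) / ρ = ∫ s in a..r, g s / s := by
  have h : ∀ ρ, g (r * ρ) / ρ = r * (g (r * ρ) / (r * ρ)) := fun ρ => by
    rcases eq_or_ne ρ 0 with rfl | hρ
    · simp
    · field_simp
  simp_rw [h, intervalIntegral.integral_const_mul,
    intervalIntegral.integral_comp_mul_left (fun s => g s / s) hr, smul_eq_mul,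
    mul_div_cancel₀ a hr, mul_one, mul_inv_cancel_left₀ hr]

theorem intervalIntegral.hasDerivAt_integral_of_continuousOn {φ ψ : ℝ → ℝ → ℝ} {a b θ₀ : ℝ}
    (hφ : ∀ t, ContinuousOn (φ · t) (uIcc a b))
    (hψ : ContinuousOn (uncurry ψ) (uIcc a b ×ˢ univ))
    (hd : ∀ s ∈ uIcc a b, ∀ t, HasDerivAt (φ s) (ψ s t) t) :
    HasDerivAt (fun t => ∫ s in a..b, φ s t) (∫ s in a..b, ψ s θ₀) θ₀ := by
  obtain ⟨M, hM⟩ := (isCompact_uIcc.prod (isCompact_closedBall θ₀ 1)).exists_bound_of_continuousOn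
    (hψ.mono (prod_mono subset_rfl (subset_univ _)))
  refine (intervalIntegral.hasDerivAt_integral_of_dominated_loc_of_deriv_le
    (F := fun t s => φ s t) (F' := fun t s => ψ s t) (bound := fun _ => M)
    (Metric.ball_mem_nhds θ₀ one_pos) ?_ (hφ θ₀).intervalIntegrable
    (((hψ.uncurry_right θ₀ (mem_univ θ₀)).mono uIoc_subset_uIcc).aestronglyMeasurable
      measurableSet_uIoc) ?_
    intervalIntegrable_const ?_).2
  · exact .of_forall fun t =>
      ((hφ t).mono uIoc_subset_uIcc).aestronglyMeasurable measurableSet_uIoc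
  · exact .of_forall fun s hs t ht =>
      hM (s, t) ⟨uIoc_subset_uIcc hs, Metric.ball_subset_closedBall ht⟩
  · exact .of_forall fun s hs t _ => hd s (uIoc_subset_uIcc hs) t

section PolarLaplace

variable {u : ℝ → ℝ → ℝ} {r₁ r₂ a r : ℝ}

theorem integral_pd2_pd2_div_eq (hr₁ : 0 ≤ r₁)
    (hu : ContDiffOn ℝ 2 (uncurry u) (Ioo r₁ r₂ ×ˢ univ))
    (hlap : ∀ r θ, r ∈ Ioo r₁ r₂ → polarLaplacian u r θ = 0)
    (ha : a ∈ Ioo r₁ r₂) (hr : r ∈ Ioo r₁ r₂) (θ : ℝ) :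
    ∫ s in a..r, pd2 (pd2 u) s θ / s = a * pd1 u a θ - r * pd1 u r θ := by
  have hS : IsOpen (Ioo r₁ r₂ ×ˢ (univ : Set ℝ)) := isOpen_Ioo.prod isOpen_univ
  have hsub : uIcc a r ⊆ Ioo r₁ r₂ := ordConnected_Ioo.uIcc_subset ha hr
  have hne : ∀ s ∈ uIcc a r, s ≠ 0 := fun s hs => (hr₁.trans_lt (hsub hs).1).ne'
  have hu1 : ContDiffOn ℝ 1 (uncurry (pd1 u)) (Ioo r₁ r₂ ×ˢ univ) := hu.pd1 hS (by norm_num)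
  have hu22 : ContinuousOn (uncurry (pd2 (pd2 u))) (Ioo r₁ r₂ ×ˢ univ) :=
    ((hu.pd2 hS (m := 1) (by norm_num)).pd2 hS (m := 0) (by norm_num)).continuousOn
  have hderiv : ∀ s ∈ uIcc a r,
      HasDerivAt (fun s => -(s * pd1 u s θ)) (pd2 (pd2 u) s θ / s) s := by
    intro s hs
    have hd : HasDerivAt (fun s => -(s * pd1 u s θ))
        (-(1 * pd1 u s θ + s * pd1 (pd1 u) s θ)) s :=
      ((hasDerivAt_id' s).mul
        (hu1.differentiableAt_of_isOpen hS one_ne_zero ⟨hsub hs, trivial⟩).hasDerivAt_pd1).neg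
    convert hd using 1
    have hl := hlap s θ (hsub hs)
    rw [polarLaplacian] at hl
    field_simp [hne s hs] at hl ⊢
    linear_combination hl
  rw [intervalIntegral.integral_eq_sub_of_hasDerivAt hderiv
    (((hu22.uncurry_right θ (mem_univ θ)).mono hsub).div continuousOn_id hne).intervalIntegrable]
  ring

theorem hasDerivAt_integral_div_right (hr₁ : 0 ≤ r₁)
    (hu : ContinuousOn (uncurry u) (Ioo r₁ r₂ ×ˢ univ)) (ha : a ∈ Ioo r₁ r₂)
    (hr : r ∈ Ioo r₁ r₂) (θ : ℝ) :
    HasDerivAt (fun r => ∫ s in a..r, u s θ / s) (u r θ / r) r := by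
  have hcont : ContinuousOn (fun s => u s θ / s) (Ioo r₁ r₂) :=
    (hu.uncurry_right θ (mem_univ θ)).div continuousOn_id fun s hs => (hr₁.trans_lt hs.1).ne'
  exact intervalIntegral.integral_hasDerivAt_right
    ((hcont.mono (ordConnected_Ioo.uIcc_subset ha hr)).intervalIntegrable)
    (hcont.stronglyMeasurableAtFilter isOpen_Ioo r hr) (hcont.continuousAt (isOpen_Ioo.mem_nhds hr))

theorem hasDerivAt_integral_div_of_hasDerivAt {φ ψ : ℝ → ℝ → ℝ} (hr₁ : 0 ≤ r₁)
    (hφ : ContinuousOn (uncurry φ) (Ioo r₁ r₂ ×ˢ univ))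
    (hψ : ContinuousOn (uncurry ψ) (Ioo r₁ r₂ ×ˢ univ))
    (hd : ∀ s ∈ Ioo r₁ r₂, ∀ t, HasDerivAt (φ s) (ψ s t) t)
    (ha : a ∈ Ioo r₁ r₂) (hr : r ∈ Ioo r₁ r₂) (θ : ℝ) :
    HasDerivAt (fun t => ∫ s in a..r, φ s t / s) (∫ s in a..r, ψ s θ / s) θ := by
  have hsub : uIcc a r ⊆ Ioo r₁ r₂ := ordConnected_Ioo.uIcc_subset ha hr
  have hne : ∀ s ∈ uIcc a r, s ≠ 0 := fun s hs => (hr₁.trans_lt (hsub hs).1).ne'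
  refine intervalIntegral.hasDerivAt_integral_of_continuousOn (φ := fun s t => φ s t / s)
    (ψ := fun s t => ψ s t / s)
    (fun t => ((hφ.uncurry_right t (mem_univ t)).mono hsub).div continuousOn_id hne)
    ((hψ.mono (prod_mono hsub subset_rfl)).div continuousOn_fst fun p hp => hne p.1 hp.1)
    fun s hs t => (hd s (hsub hs) t).div_const s

theorem pd1_eq_div_of_eq_integral_div_add (hr₁ : 0 ≤ r₁)
    (hu : ContinuousOn (uncurry u) (Ioo r₁ r₂ ×ˢ univ)) (ha : a ∈ Ioo r₁ r₂) {G : ℝ → ℝ}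
    {U : ℝ → ℝ → ℝ} (hU : ∀ r ∈ Ioo r₁ r₂, ∀ θ, U r θ = (∫ s in a..r, u s θ / s) + G θ)
    (hr : r ∈ Ioo r₁ r₂) (θ : ℝ) : pd1 U r θ = u r θ / r :=
  (((hasDerivAt_integral_div_right hr₁ hu ha hr θ).add_const (G θ)).congr_of_eventuallyEq
    (Filter.eventuallyEq_of_mem (isOpen_Ioo.mem_nhds hr) fun s hs => hU s hs θ)).deriv

theorem polarLaplacian_eq_zero_of_eq_integral_div_add (hr₁ : 0 ≤ r₁)
    (hu : ContDiffOn ℝ 2 (uncurry u) (Ioo r₁ r₂ ×ˢ univ))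
    (hlap : ∀ r θ, r ∈ Ioo r₁ r₂ → polarLaplacian u r θ = 0) (ha : a ∈ Ioo r₁ r₂)
    {G g : ℝ → ℝ} (hG : ∀ θ, HasDerivAt G (g θ) θ) (hg : ∀ θ, HasDerivAt g (-pd1 u a θ) θ)
    {U : ℝ → ℝ → ℝ} (hU : ∀ r ∈ Ioo r₁ r₂, ∀ θ, U r θ = (∫ s in a..r, u s θ / s) + a * G θ)
    (hr : r ∈ Ioo r₁ r₂) (θ : ℝ) : polarLaplacian U r θ = 0 := by
  have hS : IsOpen (Ioo r₁ r₂ ×ˢ (univ : Set ℝ)) := isOpen_Ioo.prod isOpen_univ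
  have hr0 : r ≠ 0 := (hr₁.trans_lt hr.1).ne'
  have hu2 : ContDiffOn ℝ 1 (uncurry (pd2 u)) (Ioo r₁ r₂ ×ˢ univ) := hu.pd2 hS (by norm_num)
  have hU1 : ∀ s ∈ Ioo r₁ r₂, pd1 U s θ = u s θ / s := fun s hs =>
    pd1_eq_div_of_eq_integral_div_add hr₁ hu.continuousOn ha hU hs θ
  have hU11 : pd1 (pd1 U) r θ = (pd1 u r θ * r - u r θ) / r ^ 2 := by
    have hd : HasDerivAt (fun s => u s θ / s) ((pd1 u r θ * r - u r θ * 1) / r ^ 2) r :=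
      (hu.differentiableAt_of_isOpen hS two_ne_zero ⟨hr, trivial⟩).hasDerivAt_pd1.div
        (hasDerivAt_id r) hr0
    rw [pd1, (Filter.eventuallyEq_of_mem (isOpen_Ioo.mem_nhds hr) hU1).deriv_eq, hd.deriv,
      mul_one]
  have hU2 : pd2 U r = fun t => (∫ s in a..r, pd2 u s t / s) + a * g t := funext fun t =>
    (((hasDerivAt_integral_div_of_hasDerivAt hr₁ hu.continuousOn hu2.continuousOn
      (fun s hs t => (hu.differentiableAt_of_isOpen hS two_ne_zero ⟨hs, trivial⟩).hasDerivAt_pd2)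
      ha hr t).add ((hG t).const_mul a)).congr_of_eventuallyEq
      (.of_forall (hU r hr))).deriv
  have hU22 : pd2 (pd2 U) r θ = -(r * pd1 u r θ) := by
    have hd : HasDerivAt (fun t => (∫ s in a..r, pd2 u s t / s) + a * g t)
        ((∫ s in a..r, pd2 (pd2 u) s θ / s) + a * -pd1 u a θ) θ :=
      (hasDerivAt_integral_div_of_hasDerivAt hr₁ hu2.continuousOn
      ((hu.pd2 hS (m := 1) (by norm_num)).pd2 hS (m := 0) (by norm_num)).continuousOn
      (fun s hs t => (hu2.differentiableAt_of_isOpen hS one_ne_zero ⟨hs, trivial⟩).hasDerivAt_pd2)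
      ha hr θ).add ((hg θ).const_mul a)
    rw [pd2, hU2, hd.deriv, integral_pd2_pd2_div_eq hr₁ hu hlap ha hr]
    ring
  rw [polarLaplacian, hU11, hU1 r hr, hU22]
  field_simp
  ring

end PolarLaplace

theorem Real.sqrt_mul_mem_Ioo {r₁ r₂ : ℝ} (h1 : 0 < r₁) (h2 : r₁ < r₂) :
    √(r₁ * r₂) ∈ Ioo r₁ r₂ :=
  ⟨(Real.lt_sqrt h1.le).2 (by nlinarith), (Real.sqrt_lt' (h1.trans h2)).2 (by nlinarith)⟩

theorem stmt4_general (r₁ r₂ : ℝ) (h1 : 0 < r₁) (h2 : r₁ < r₂)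
    (u : ℝ → ℝ → ℝ)
    (hper : ∀ r θ : ℝ, u r (θ + 2 * Real.pi) = u r θ)
    (hC2 : ContDiffOn ℝ 2 (fun p : ℝ × ℝ => u p.1 p.2) (Set.Ioo r₁ r₂ ×ˢ (Set.univ : Set ℝ)))
    (hlap : ∀ r θ : ℝ, r ∈ Set.Ioo r₁ r₂ →
      pd1 (pd1 u) r θ + (1 / r) * pd1 u r θ + (1 / r ^ 2) * pd2 (pd2 u) r θ = 0)
    (hzero : (∫ τ in (0:ℝ)..(2 * Real.pi), pd1 u (Real.sqrt (r₁ * r₂)) τ) = 0)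
    (C : ℝ)
    (hC : C = (1 / (2 * Real.pi)) * ∫ t in (0:ℝ)..(2 * Real.pi),
        (∫ τ in (0:ℝ)..t, pd1 u (Real.sqrt (r₁ * r₂)) τ))
    (U : ℝ → ℝ → ℝ)
    (hU : ∀ r θ : ℝ, U r θ = (∫ ρ in (Real.sqrt (r₁ * r₂) / r)..1, u (r * ρ) θ / ρ)
        + Real.sqrt (r₁ * r₂) * ∫ t in (0:ℝ)..θ,
            (C - ∫ τ in (0:ℝ)..t, pd1 u (Real.sqrt (r₁ * r₂)) τ)) :
    (∀ r ∈ Set.Icc r₁ r₂, ∀ θ : ℝ, U r (θ + 2 * Real.pi) = U r θ) ∧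
    (∀ r θ : ℝ, r ∈ Set.Ioo r₁ r₂ →
      pd1 (pd1 U) r θ + (1 / r) * pd1 U r θ + (1 / r ^ 2) * pd2 (pd2 U) r θ = 0) ∧
    (∀ r θ : ℝ, r ∈ Set.Ioo r₁ r₂ → pd1 U r θ = u r θ / r) := by
  set a := √(r₁ * r₂)
  have ha : a ∈ Ioo r₁ r₂ := Real.sqrt_mul_mem_Ioo h1 h2
  have hua : Continuous (pd1 u a) := continuousOn_univ.1 <|
    ((hC2.pd1 (isOpen_Ioo.prod isOpen_univ) (m := 0) (by norm_num)).continuousOn).uncurry_left a ha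
  have hF : Periodic (fun t => ∫ τ in 0..t, pd1 u a τ) (2 * π) :=
    Periodic.periodic_primitive (fun t => by simp only [pd1, hper]) hua.intervalIntegrable hzero
  have hFcont : Continuous fun t => ∫ τ in 0..t, pd1 u a τ :=
    intervalIntegral.continuous_primitive hua.intervalIntegrable 0
  have hG : Periodic (fun θ => ∫ t in 0..θ, (C - ∫ τ in 0..t, pd1 u a τ)) (2 * π) := by
    refine Periodic.periodic_primitive (fun t => by simp only [hF t])
      (continuous_const.sub hFcont).intervalIntegrable ?_
    rw [intervalIntegral.integral_sub intervalIntegrable_const (hFcont.intervalIntegrable _ _),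
      intervalIntegral.integral_const, smul_eq_mul, hC]
    field_simp
    ring
  have hU' : ∀ r ∈ Ioo r₁ r₂, ∀ θ, U r θ = (∫ s in a..r, u s θ / s)
      + a * ∫ t in 0..θ, (C - ∫ τ in 0..t, pd1 u a τ) := fun r hr θ => by
    rw [hU, intervalIntegral.integral_comp_mul_left_div_self (u · θ) (h1.trans hr.1).ne']
  refine ⟨fun r _ θ => ?_, fun r θ hr => ?_, fun r θ hr => ?_⟩
  · simp only [hU, hper, hG θ]
  · exact polarLaplacian_eq_zero_of_eq_integral_div_add h1.le hC2 hlap ha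
      (fun θ => ((continuous_const.sub hFcont).integral_hasStrictDerivAt 0 θ).hasDerivAt)
      (fun θ => ((hua.integral_hasStrictDerivAt 0 θ).hasDerivAt).const_sub C) hU' hr θ
  · exact pd1_eq_div_of_eq_integral_div_add h1.le hC2.continuousOn ha hU' hr θ

theorem stmt4 (r₁ r₂ : ℝ) (h1 : 0 < r₁) (h2 : r₁ < r₂)
    (u : ℝ → ℝ → ℝ)
    (hcont : ContinuousOn (fun p : ℝ × ℝ => u p.1 p.2) (Set.Icc r₁ r₂ ×ˢ (Set.univ : Set ℝ)))
    (hper : ∀ r θ : ℝ, u r (θ + 2 * Real.pi) = u r θ)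
    (hC2 : ContDiffOn ℝ 2 (fun p : ℝ × ℝ => u p.1 p.2) (Set.Ioo r₁ r₂ ×ˢ (Set.univ : Set ℝ)))
    (hlap : ∀ r θ : ℝ, r ∈ Set.Ioo r₁ r₂ →
      pd1 (pd1 u) r θ + (1 / r) * pd1 u r θ + (1 / r ^ 2) * pd2 (pd2 u) r θ = 0)
    (hzero : (∫ τ in (0:ℝ)..(2 * Real.pi), pd1 u (Real.sqrt (r₁ * r₂)) τ) = 0)
    (C : ℝ)
    (hC : C = (1 / (2 * Real.pi)) * ∫ t in (0:ℝ)..(2 * Real.pi),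
        (∫ τ in (0:ℝ)..t, pd1 u (Real.sqrt (r₁ * r₂)) τ))
    (U : ℝ → ℝ → ℝ)
    (hU : ∀ r θ : ℝ, U r θ = (∫ ρ in (Real.sqrt (r₁ * r₂) / r)..1, u (r * ρ) θ / ρ)
        + Real.sqrt (r₁ * r₂) * ∫ t in (0:ℝ)..θ,
            (C - ∫ τ in (0:ℝ)..t, pd1 u (Real.sqrt (r₁ * r₂)) τ)) :
    (∀ r ∈ Set.Icc r₁ r₂, ∀ θ : ℝ, U r (θ + 2 * Real.pi) = U r θ) ∧
    (∀ r θ : ℝ, r ∈ Set.Ioo r₁ r₂ →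
      pd1 (pd1 U) r θ + (1 / r) * pd1 U r θ + (1 / r ^ 2) * pd2 (pd2 U) r θ = 0) ∧
    (∀ r θ : ℝ, r ∈ Set.Ioo r₁ r₂ → pd1 U r θ = u r θ / r) :=
  stmt4_general r₁ r₂ h1 h2 u hper hC2 hlap hzero C hC U hU
end

section
/- Let f: ∂𝔻 → ℝ be continuous on the unit circle with ∫₀^{2π} f(e^{iθ}) dθ = 0, and let u be the (unique) solution of the Dirichlet problem on the unit disk 𝔻 with boundary data f. Define U(z) = ∫₀¹ u(ρz)/ρ dρ for z ∈ 𝔻. Then U is well defined (the integrand extends continuously to ρ = 0 with value the directional derivative ⟨∇u(0), z⟩), U is harmonic in 𝔻, and U(0) = 0. -/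
/-!
The mean value property gives `u 0 = (2π)⁻¹ ∫ f = 0`. On the disk `u = re F` with `F`
holomorphic, so `u 0 = 0` lets us write `u w = re (w Φ(w))` with `Φ = dslope F 0` holomorphic.
Hence `u(ρz)/ρ = re (z Φ(ρz))` for `ρ > 0`, and `∫₀¹ z Φ(ρz) dρ = P z - P 0` for a primitive
`P` of `Φ` on the disk, so `U = re (P - P 0)` there and `U` is harmonic.
-/

noncomputable def pdx (f : ℂ → ℝ) (z : ℂ) : ℝ := deriv (fun t : ℝ => f (z + t)) 0
noncomputable def pdy (f : ℂ → ℝ) (z : ℂ) : ℝ := deriv (fun t : ℝ => f (z + t * Complex.I)) 0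

open Metric Complex Filter Set MeasureTheory InnerProductSpace
open scoped Laplacian Topology Interval

theorem pdx_eq_lineDeriv (f : ℂ → ℝ) (z : ℂ) : pdx f z = lineDeriv ℝ f z 1 := by
  simp [pdx, lineDeriv, Complex.real_smul]

theorem pdy_eq_lineDeriv (f : ℂ → ℝ) (z : ℂ) : pdy f z = lineDeriv ℝ f z I := by
  simp [pdy, lineDeriv, Complex.real_smul]

theorem ContDiffAt.lineDeriv_lineDeriv {E F : Type*} [NormedAddCommGroup E] [NormedSpace ℝ E]
    [NormedAddCommGroup F] [NormedSpace ℝ F] {f : E → F} {x : E} (hf : ContDiffAt ℝ 2 f x)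
    (v w : E) :
    lineDeriv ℝ (fun y ↦ lineDeriv ℝ f y v) x w = iteratedFDeriv ℝ 2 f x ![w, v] := by
  have hdiff : ∀ᶠ y in 𝓝 x, DifferentiableAt ℝ f y :=
    (hf.eventually (by simp)).mono fun y hy ↦ hy.differentiableAt (by simp)
  have hf' : DifferentiableAt ℝ (fderiv ℝ f) x :=
    (hf.fderiv_right (m := 1) le_rfl).differentiableAt one_ne_zero
  rw [Filter.EventuallyEq.lineDeriv_eq (f := fun y ↦ fderiv ℝ f y v)
      (hdiff.mono fun y hy ↦ hy.lineDeriv_eq_fderiv),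
    (hf'.clm_apply (differentiableAt_const v)).lineDeriv_eq_fderiv, iteratedFDeriv_two_apply]
  simp [fderiv_clm_apply hf' (differentiableAt_const v)]

theorem pdx_pdx_add_pdy_pdy_eq_laplacian {f : ℂ → ℝ} {z : ℂ} (hf : ContDiffAt ℝ 2 f z) :
    pdx (pdx f) z + pdy (pdy f) z = Δ f z := by
  rw [pdx_eq_lineDeriv, pdy_eq_lineDeriv, funext (pdx_eq_lineDeriv f),
    funext (pdy_eq_lineDeriv f), hf.lineDeriv_lineDeriv, hf.lineDeriv_lineDeriv,
    laplacian_eq_iteratedFDeriv_complexPlane]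

theorem InnerProductSpace.harmonicOnNhd_of_pdx_pdx_add_pdy_pdy {f : ℂ → ℝ} {s : Set ℂ}
    (hs : IsOpen s) (hf : ContDiffOn ℝ 2 f s)
    (hΔ : ∀ z ∈ s, pdx (pdx f) z + pdy (pdy f) z = 0) : HarmonicOnNhd f s := by
  intro z hz
  refine ⟨hf.contDiffAt (hs.mem_nhds hz), ?_⟩
  filter_upwards [hs.mem_nhds hz] with w hw
  rw [← pdx_pdx_add_pdy_pdy_eq_laplacian (hf.contDiffAt (hs.mem_nhds hw)), hΔ w hw, Pi.zero_apply]

theorem InnerProductSpace.HarmonicAt.pdx_pdx_add_pdy_pdy {f : ℂ → ℝ} {z : ℂ}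
    (hf : HarmonicAt f z) : pdx (pdx f) z + pdy (pdy f) z = 0 := by
  rw [pdx_pdx_add_pdy_pdy_eq_laplacian hf.1]
  exact hf.2.eq_of_nhds

theorem InnerProductSpace.HarmonicContOnCl.eq_integral_unitCircle {f : ℂ → ℝ}
    (hf : HarmonicContOnCl f (ball 0 1)) :
    f 0 = (2 * Real.pi)⁻¹ * ∫ θ in (0:ℝ)..2 * Real.pi, f (exp (θ * I)) := by
  have hf' : HarmonicContOnCl f (ball 0 |1|) := by rwa [abs_one]
  rw [← hf'.circleAverage_eq, Real.circleAverage_def]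
  simp [circleMap]

theorem tendsto_comp_ofReal_mul_div {u : ℂ → ℝ} (hu : DifferentiableAt ℝ u 0) (hu0 : u 0 = 0)
    (z : ℂ) :
    Tendsto (fun ρ : ℝ ↦ u (ρ * z) / ρ) (𝓝[>] 0) (𝓝 (pdx u 0 * z.re + pdy u 0 * z.im)) := by
  have hline : HasDerivAt (fun ρ : ℝ ↦ u (ρ * z)) (fderiv ℝ u 0 z) 0 := by
    have hu' : HasFDerivAt u (fderiv ℝ u 0) ((0 : ℝ) • z) := by simpa using hu.hasFDerivAt
    simpa [Function.comp_def] using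
      hu'.comp_hasDerivAt (0 : ℝ) ((hasDerivAt_id (0 : ℝ)).smul_const z)
  have hval : fderiv ℝ u 0 z = pdx u 0 * z.re + pdy u 0 * z.im := by
    conv_lhs => rw [(by simp : z = z.re • (1 : ℂ) + z.im • I)]
    simp only [map_add, map_smul, pdx_eq_lineDeriv, pdy_eq_lineDeriv, hu.lineDeriv_eq_fderiv,
      smul_eq_mul]
    ring
  rw [← hval]
  refine ((hasDerivAt_iff_tendsto_slope_zero.1 hline).mono_left
    (nhdsWithin_mono _ fun _ h ↦ ne_of_gt h)).congr fun ρ ↦ ?_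
  simp [hu0, div_eq_inv_mul]

theorem ofReal_mul_mem_ball {r ρ : ℝ} {z : ℂ} (hρ : ρ ∈ Icc (0 : ℝ) 1) (hz : z ∈ ball 0 r) :
    (ρ : ℂ) * z ∈ ball 0 r := by
  simpa [Complex.real_smul] using
    (convex_ball (0 : ℂ) r).smul_mem_of_zero_mem (mem_ball_self (pos_of_mem_ball hz)) hz hρ

theorem integral_smul_comp_ofReal_mul_eq_sub {E : Type*} [NormedAddCommGroup E]
    [NormedSpace ℂ E] [CompleteSpace E] {Φ P : ℂ → E} {r : ℝ} {z : ℂ}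
    (hP : ∀ w ∈ ball 0 r, HasDerivAt P (Φ w) w) (hΦ : ContinuousOn Φ (ball 0 r))
    (hz : z ∈ ball 0 r) :
    ∫ ρ in (0:ℝ)..1, z • Φ (ρ * z) = P z - P 0 := by
  have hseg : ∀ ρ ∈ uIcc (0:ℝ) 1, (ρ : ℂ) * z ∈ ball 0 r := fun ρ hρ ↦
    ofReal_mul_mem_ball (by rwa [uIcc_of_le zero_le_one] at hρ) hz
  have hderiv : ∀ ρ ∈ uIcc (0:ℝ) 1, HasDerivAt (fun ρ : ℝ ↦ P (ρ * z)) (z • Φ (ρ * z)) ρ := by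
    intro ρ hρ
    have hline : HasDerivAt (fun ρ : ℝ ↦ (ρ : ℂ) * z) z ρ := by
      simpa using ((hasDerivAt_id ρ).ofReal_comp).mul_const z
    simpa [Function.comp_def] using
      ((hP _ (hseg ρ hρ)).hasFDerivAt.restrictScalars ℝ).comp_hasDerivAt ρ hline
  have hcont : ContinuousOn (fun ρ : ℝ ↦ z • Φ (ρ * z)) (uIcc 0 1) :=
    (hΦ.comp (by fun_prop) hseg).const_smul z
  simpa using intervalIntegral.integral_eq_sub_of_hasDerivAt hderiv hcont.intervalIntegrable

theorem InnerProductSpace.HarmonicOnNhd.exists_eq_re_mul {u : ℂ → ℝ} {r : ℝ}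
    (hu : HarmonicOnNhd u (ball 0 r)) (hu0 : u 0 = 0) :
    ∃ Φ : ℂ → ℂ, DifferentiableOn ℂ Φ (ball 0 r) ∧ ∀ w ∈ ball 0 r, u w = (w * Φ w).re := by
  obtain ⟨F, hF, hFu⟩ := hu.exists_analyticOnNhd_ball_re_eq
  refine ⟨dslope F 0, fun w hw ↦ ?_, fun w hw ↦ ?_⟩
  · exact (differentiableOn_dslope (ball_mem_nhds 0 (pos_of_mem_ball hw))).2
      hF.differentiableOn w hw
  · have h := congrArg re (sub_smul_dslope F 0 w)
    rw [sub_zero, smul_eq_mul] at h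
    have hFu0 : (F 0).re = u 0 := hFu (mem_ball_self (pos_of_mem_ball hw))
    rw [h, sub_re, hFu0, hu0, sub_zero]
    exact (hFu hw).symm

theorem InnerProductSpace.HarmonicOnNhd.exists_re_eq_integral_div {u : ℂ → ℝ} {r : ℝ}
    (hu : HarmonicOnNhd u (ball 0 r)) (hu0 : u 0 = 0) :
    ∃ H : ℂ → ℂ, DifferentiableOn ℂ H (ball 0 r) ∧ ∀ z ∈ ball 0 r,
      IntervalIntegrable (fun ρ : ℝ ↦ u (ρ * z) / ρ) volume 0 1 ∧
      ∫ ρ in (0:ℝ)..1, u (ρ * z) / ρ = (H z).re := by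
  obtain ⟨Φ, hΦ, huΦ⟩ := hu.exists_eq_re_mul hu0
  obtain ⟨P, hP⟩ := hΦ.isExactOn_ball
  refine ⟨fun z ↦ P z - P 0,
    fun w hw ↦ ((hP w hw).differentiableAt.sub_const _).differentiableWithinAt, fun z hz ↦ ?_⟩
  have hcont : ContinuousOn (fun ρ : ℝ ↦ z * Φ (ρ * z)) (uIcc 0 1) :=
    (hΦ.continuousOn.comp (by fun_prop) fun ρ hρ ↦
      ofReal_mul_mem_ball (by rwa [uIcc_of_le zero_le_one] at hρ) hz).const_smul z
  have heq : EqOn (fun ρ : ℝ ↦ u (ρ * z) / ρ) (fun ρ ↦ (z * Φ (ρ * z)).re) (Ι 0 1) := by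
    intro ρ hρ
    rw [uIoc_of_le zero_le_one] at hρ
    dsimp only
    rw [huΦ _ (ofReal_mul_mem_ball (Ioc_subset_Icc_self hρ) hz), mul_assoc, re_ofReal_mul,
      mul_div_cancel_left₀ _ hρ.1.ne']
  refine ⟨(intervalIntegrable_congr heq).2
    (reCLM.continuous.comp_continuousOn hcont).intervalIntegrable, ?_⟩
  calc ∫ ρ in (0:ℝ)..1, u (ρ * z) / ρ = ∫ ρ in (0:ℝ)..1, reCLM (z * Φ (ρ * z)) :=
        intervalIntegral.integral_congr_ae (.of_forall fun ρ hρ ↦ heq hρ)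
    _ = (∫ ρ in (0:ℝ)..1, z • Φ (ρ * z)).re :=
        reCLM.intervalIntegral_comp_comm hcont.intervalIntegrable
    _ = (P z - P 0).re := by rw [integral_smul_comp_ofReal_mul_eq_sub hP hΦ.continuousOn hz]

theorem stmt15_general (f : ℂ → ℝ)
    (hf0 : (∫ θ in (0:ℝ)..(2 * Real.pi), f (Complex.exp ((θ : ℂ) * Complex.I))) = 0)
    (u : ℂ → ℝ)
    (huC : ContDiffOn ℝ 2 u (Metric.ball (0 : ℂ) 1))
    (huh : ∀ z ∈ Metric.ball (0 : ℂ) 1, pdx (pdx u) z + pdy (pdy u) z = 0)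
    (hucont : ContinuousOn u (Metric.closedBall (0 : ℂ) 1))
    (hub : ∀ z ∈ Metric.sphere (0 : ℂ) 1, u z = f z)
    (U : ℂ → ℝ)
    (hU : ∀ z : ℂ, U z = ∫ ρ in (0:ℝ)..1, u ((ρ : ℂ) * z) / ρ) :
    (∀ z ∈ Metric.ball (0 : ℂ) 1,
      IntervalIntegrable (fun ρ : ℝ => u ((ρ : ℂ) * z) / ρ) MeasureTheory.volume 0 1 ∧
      Filter.Tendsto (fun ρ : ℝ => u ((ρ : ℂ) * z) / ρ) (nhdsWithin 0 (Set.Ioi 0))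
        (nhds (pdx u 0 * z.re + pdy u 0 * z.im))) ∧
    (∀ z ∈ Metric.ball (0 : ℂ) 1, pdx (pdx U) z + pdy (pdy U) z = 0) ∧
    U 0 = 0 := by
  have hu : HarmonicOnNhd u (ball 0 1) := harmonicOnNhd_of_pdx_pdx_add_pdy_pdy isOpen_ball huC huh
  have hu0 : u 0 = 0 := by
    rw [(HarmonicContOnCl.mk_ball hu hucont).eq_integral_unitCircle,
      intervalIntegral.integral_congr fun θ _ ↦ hub (exp (θ * I)) (by simp), hf0, mul_zero]
  obtain ⟨H, hH, hUH⟩ := hu.exists_re_eq_integral_div hu0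
  refine ⟨fun z hz ↦ ⟨(hUH z hz).1, ?_⟩, fun z hz ↦ ?_, by simp [hU, hu0]⟩
  · exact tendsto_comp_ofReal_mul_div
      ((hu 0 (mem_ball_self one_pos)).1.differentiableAt two_ne_zero) hu0 z
  · have hUH_nhds : U =ᶠ[𝓝 z] fun w ↦ (H w).re := by
      filter_upwards [isOpen_ball.mem_nhds hz] with w hw
      rw [hU, (hUH w hw).2]
    exact ((harmonicAt_congr_nhds hUH_nhds).2
      (hH.analyticAt (isOpen_ball.mem_nhds hz)).harmonicAt_re).pdx_pdx_add_pdy_pdy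

theorem stmt15 (f : ℂ → ℝ) (hf : ContinuousOn f (Metric.sphere (0 : ℂ) 1))
    (hf0 : (∫ θ in (0:ℝ)..(2 * Real.pi), f (Complex.exp ((θ : ℂ) * Complex.I))) = 0)
    (u : ℂ → ℝ)
    (huC : ContDiffOn ℝ 2 u (Metric.ball (0 : ℂ) 1))
    (huh : ∀ z ∈ Metric.ball (0 : ℂ) 1, pdx (pdx u) z + pdy (pdy u) z = 0)
    (hucont : ContinuousOn u (Metric.closedBall (0 : ℂ) 1))
    (hub : ∀ z ∈ Metric.sphere (0 : ℂ) 1, u z = f z)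
    (U : ℂ → ℝ)
    (hU : ∀ z : ℂ, U z = ∫ ρ in (0:ℝ)..1, u ((ρ : ℂ) * z) / ρ) :
    (∀ z ∈ Metric.ball (0 : ℂ) 1,
      IntervalIntegrable (fun ρ : ℝ => u ((ρ : ℂ) * z) / ρ) MeasureTheory.volume 0 1 ∧
      Filter.Tendsto (fun ρ : ℝ => u ((ρ : ℂ) * z) / ρ) (nhdsWithin 0 (Set.Ioi 0))
        (nhds (pdx u 0 * z.re + pdy u 0 * z.im))) ∧
    (∀ z ∈ Metric.ball (0 : ℂ) 1, pdx (pdx U) z + pdy (pdy U) z = 0) ∧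
    U 0 = 0 :=
  stmt15_general f hf0 u huC huh hucont hub U hU
end
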